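/- Let $X$ be a normal variety over a field of characteristic zero, $x \in X$ a closed point, and $\widehat{X} = \operatorname{Spec}\widehat{\mathcal{O}_{X,x}}$. Let $D$ be a Weil divisor on $X$ and $\widehat{D}$ the induced Weil divisor on $\widehat{X}$ (the closure of the pullback of $D$ from the smooth locus). Then $D$ is Cartier in a neighbourhood of $x$ if and only if $\widehat{D}$ is Cartier. -/

import Mathlib

section StmtAux

open AdicCompletion Submodule

variable {R : Type*} [CommRing R]

variable (P : Ideal R)

lemma mem_map_iff_smul {J : Ideal R} {x : AdicCompletion P R} :
    x ∈ J.map (algebraMap R (AdicCompletion P R)) ↔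
      x ∈ J • (⊤ : Submodule R (AdicCompletion P R)) := by
  rw [Ideal.smul_top_eq_map]; rfl


lemma val_eq_zero_of_mem {n : ℕ} {x : AdicCompletion P R}
    (hx : x ∈ (P ^ n).map (algebraMap R (AdicCompletion P R))) : x.val n = 0 := by
  rw [mem_map_iff_smul] at hx
  refine Submodule.smul_induction_on hx (fun r hr b _ => ?_) (fun u v hu hv => ?_)
  · obtain ⟨v, hv⟩ := Submodule.Quotient.mk_surjective _ (b.val n)
    rw [val_smul_apply, ← hv, ← Submodule.Quotient.mk_smul]
    exact (Submodule.Quotient.mk_eq_zero _).2 (Submodule.smul_mem_smul hr mem_top)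
  · rw [val_add_apply, hu, hv, add_zero]


lemma isUnit_one_add {μ : AdicCompletion P R}
    (hμ : μ ∈ P.map (algebraMap R (AdicCompletion P R))) : IsUnit (1 + μ) := by
  have hpow : ∀ {m i : ℕ}, m ≤ i → ((-μ) ^ i).val m = 0 := by
    intro m i hmi
    apply val_eq_zero_of_mem
    have h1 : (-μ) ^ i ∈ (P.map (algebraMap R (AdicCompletion P R))) ^ i :=
      Ideal.pow_mem_pow (neg_mem hμ) i
    rw [← Ideal.map_pow] at h1
    exact Ideal.map_mono (Ideal.pow_le_pow_right hmi) h1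
  have hzero : ∀ {m n : ℕ}, m ≤ n →
      ((∑ i ∈ Finset.Ico m n, (-μ) ^ i : AdicCompletion P R)).val m = 0 := by
    intro m n hmn
    rw [val_sum_apply]
    exact Finset.sum_eq_zero fun i hi => by simpa using hpow (Finset.mem_Ico.mp hi).1
  let s : ℕ → AdicCompletion P R := fun n => ∑ i ∈ Finset.range n, (-μ) ^ i
  have hsplit : ∀ {m n : ℕ}, m ≤ n →
      s n = s m + ∑ i ∈ Finset.Ico m n, (-μ) ^ i := by
    intro m n hmn
    show (∑ i ∈ Finset.range n, (-μ) ^ i) = _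
    simp only [s, Finset.range_eq_Ico]
    rw [← Finset.sum_Ico_consecutive _ (Nat.zero_le m) hmn]
  have hcompat : ∀ {m n : ℕ} (hmn : m ≤ n),
      AdicCompletion.transitionMap P R hmn ((s n).val n) = (s m).val m := by
    intro m n hmn
    rw [(s n).property hmn, hsplit hmn, val_add_apply, hzero hmn, add_zero]
  refine IsUnit.of_mul_eq_one ⟨fun n => (s n).val n, hcompat⟩ ?_
  ext n
  show ((1 + μ) * _).val n = (1 : AdicCompletion P R).val n
  erw [val_mul]
  have h1 : (1 + μ).val n * (s n).val n = ((1 + μ) * s n).val n := (val_mul _ n _ _).symm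
  rw [h1]
  have hgeom : (1 + μ) * s n = 1 - (-μ) ^ n := by
    have h3 := geom_sum_mul (-μ) n
    have h2 : (1 + μ) * s n = -(((-μ) - 1) * s n) := by ring
    rw [h2, mul_comm, h3]; ring
  rw [hgeom, val_sub_apply, hpow (le_refl n), sub_zero, val_one]

lemma map_le_jacobson_bot :
    P.map (algebraMap R (AdicCompletion P R)) ≤ Ideal.jacobson ⊥ := by
  intro μ hμ
  rw [Ideal.mem_jacobson_bot]
  intro y
  rw [add_comm]
  exact isUnit_one_add P (Ideal.mul_mem_right y _ hμ)

/-- Every element of the adic completion is congruent to an element of `R`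
modulo the extension of `P`. -/
lemma exists_sub_mem [IsNoetherianRing R] (b : AdicCompletion P R) :
    ∃ c : R, b - algebraMap R (AdicCompletion P R) c
      ∈ P.map (algebraMap R (AdicCompletion P R)) := by
  obtain ⟨c, hc⟩ := Submodule.Quotient.mk_surjective _ (b.val 1)
  refine ⟨c, ?_⟩
  set x := b - algebraMap R (AdicCompletion P R) c with hxdef
  have hx1 : x.val 1 = 0 := by
    rw [hxdef, val_sub_apply]
    have : ((algebraMap R (AdicCompletion P R)) c).val 1
        = Submodule.Quotient.mk (p := (P ^ 1 • ⊤ : Submodule R R)) c := rfl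
    rw [this, hc, sub_self]
  -- x is in the image of the completion of the submodule P
  have hP : Module.Finite R ↥(P : Submodule R R) :=
    Module.Finite.iff_fg.mpr (IsNoetherian.noetherian _)
  have hexact := AdicCompletion.map_exact (I := P)
    (Submodule.injective_subtype (P : Submodule R R))
    (LinearMap.exact_subtype_mkQ (P : Submodule R R))
    (Submodule.mkQ_surjective (P : Submodule R R))
  have hzero : AdicCompletion.map P (Submodule.mkQ (P : Submodule R R)) x = 0 := by
    ext n
    match n with
    | 0 =>
      have : Subsingleton ((R ⧸ (P : Submodule R R)) ⧸
          (P ^ 0 • ⊤ : Submodule R (R ⧸ (P : Submodule R R)))) := by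
        rw [Submodule.Quotient.subsingleton_iff, pow_zero, Ideal.one_eq_top,
          Submodule.top_smul]
      exact Subsingleton.elim _ _
    | (k + 1) =>
      obtain ⟨r, hr⟩ := Submodule.Quotient.mk_surjective _ (x.val (k + 1))
      have hr1 : r ∈ P := by
        have h1 := x.property (show 1 ≤ k + 1 by omega)
        rw [← hr, Submodule.mapQ_apply, LinearMap.id_apply, hx1] at h1
        have h2 := (Submodule.Quotient.mk_eq_zero _).1 h1
        rw [pow_one] at h2
        exact Submodule.smul_le.mpr
          (fun a ha s _ => by rw [smul_eq_mul]; exact Ideal.mul_mem_right s P ha) h2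
      rw [map_val_apply, ← hr, LinearMap.reduceModIdeal_apply, AdicCompletion.val_zero]
      refine (Submodule.Quotient.mk_eq_zero _).2 ?_
      rw [Submodule.mkQ_apply, (Submodule.Quotient.mk_eq_zero _).2 hr1]
      exact Submodule.zero_mem _
  obtain ⟨y, hy⟩ := (hexact x).mp hzero
  rw [mem_map_iff_smul]
  -- present P as quotient of a finite free module
  obtain ⟨k, g, hg⟩ := Module.Finite.exists_fin' R ↥(P : Submodule R R)
  obtain ⟨z, hz⟩ := AdicCompletion.map_surjective P hg y
  set h : (Fin k → R) →ₗ[R] R := (Submodule.subtype (P : Submodule R R)) ∘ₗ g with hhdef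
  have hx : x = AdicCompletion.map P h z := by
    rw [hhdef, ← AdicCompletion.map_comp_apply, hz, hy]
  have hmem : ∀ q : Fin k → R, h q ∈ P := fun q => (g q).2
  have hsum : x = ∑ j : Fin k,
      h (fun i => if j = i then 1 else 0) •
        (AdicCompletion.map P (LinearMap.proj j) z) := by
    rw [hx]
    ext n
    obtain ⟨p, hp⟩ := Submodule.Quotient.mk_surjective _ (z.val n)
    rw [val_sum_apply, map_val_apply, ← hp, LinearMap.reduceModIdeal_apply]
    have hterm : ∀ j : Fin k,
        (h (fun i => if j = i then 1 else 0) •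
          (AdicCompletion.map P (LinearMap.proj j) z)).val n
        = Submodule.Quotient.mk (p := (P ^ n • ⊤ : Submodule R R))
            (h (fun i => if j = i then 1 else 0) • p j) := by
      intro j
      rw [val_smul_apply, map_val_apply, ← hp, LinearMap.reduceModIdeal_apply,
        ← Submodule.Quotient.mk_smul]
      rfl
    rw [Finset.sum_congr rfl (fun j _ => hterm j)]
    simp only [← Submodule.mkQ_apply, ← map_sum]
    congr 1
    conv_lhs => rw [pi_eq_sum_univ p]
    rw [map_sum]
    simp only [map_smul, smul_eq_mul]
    exact Finset.sum_congr rfl fun j _ => mul_comm _ _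
  rw [hsum]
  exact Submodule.sum_mem _ fun j _ =>
    Submodule.smul_mem_smul (hmem _) Submodule.mem_top

/-- Contraction of extension along completion at the maximal ideal is trivial. -/
lemma mem_of_algebraMap_mem_map [IsNoetherianRing R] [IsLocalRing R] (J : Ideal R) (x : R)
    (hx : algebraMap R (AdicCompletion (IsLocalRing.maximalIdeal R) R) x
      ∈ J.map (algebraMap R (AdicCompletion (IsLocalRing.maximalIdeal R) R))) : x ∈ J := by
  set m := IsLocalRing.maximalIdeal R
  rw [mem_map_iff_smul] at hx
  -- in each quotient level, x lies in J + m ^ n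
  have key : ∀ n : ℕ, ∃ u ∈ (J : Submodule R R), x - u ∈ (m ^ n • ⊤ : Submodule R R) := by
    intro n
    have h1 : (algebraMap R (AdicCompletion m R) x).val n
        ∈ Submodule.map (AdicCompletion.eval m R n) (J • ⊤) := ⟨_, hx, rfl⟩
    rw [Submodule.map_smul''] at h1
    have h2 : (algebraMap R (AdicCompletion m R) x).val n
        ∈ J • (⊤ : Submodule R (R ⧸ (m ^ n • ⊤ : Submodule R R))) :=
      Submodule.smul_mono le_rfl le_top h1
    have h3 : J • (⊤ : Submodule R (R ⧸ (m ^ n • ⊤ : Submodule R R)))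
        = Submodule.map (Submodule.mkQ _) (J • (⊤ : Submodule R R)) := by
      rw [Submodule.map_smul'', Submodule.map_top, Submodule.range_mkQ]
    rw [h3] at h2
    obtain ⟨u, hu, hux⟩ := h2
    refine ⟨u, ?_, ?_⟩
    · exact Submodule.smul_le.mpr
        (fun a ha s _ => by rw [smul_eq_mul]; exact Ideal.mul_mem_right s J ha) hu
    · have : ((algebraMap R (AdicCompletion m R)) x).val n
          = Submodule.Quotient.mk (p := (m ^ n • ⊤ : Submodule R R)) x := rfl
      rw [this] at hux
      rw [← Submodule.Quotient.eq]
      rw [← hux, Submodule.mkQ_apply]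
  -- Krull intersection in R ⧸ J
  have hfin : Module.Finite R (R ⧸ (J : Submodule R R)) := inferInstance
  have hbot := Ideal.iInf_pow_smul_eq_bot_of_isLocalRing
    (R := R) (M := R ⧸ (J : Submodule R R)) (I := m)
    (IsLocalRing.maximalIdeal.isMaximal R).ne_top
  have hmem : Submodule.mkQ (J : Submodule R R) x
      ∈ (⨅ i : ℕ, m ^ i • ⊤ : Submodule R (R ⧸ (J : Submodule R R))) := by
    rw [Submodule.mem_iInf]
    intro n
    obtain ⟨u, hu, hxu⟩ := key n
    have h0 : Submodule.mkQ (J : Submodule R R) u = 0 := by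
      rw [Submodule.mkQ_apply]; exact (Submodule.Quotient.mk_eq_zero _).2 hu
    have : Submodule.mkQ (J : Submodule R R) x = Submodule.mkQ _ (x - u) := by
      rw [map_sub, h0, sub_zero]
    rw [this]
    rw [show Submodule.mkQ (J : Submodule R R) (x - u) = Submodule.Quotient.mk (x - u) from rfl]
    have : (m ^ n • ⊤ : Submodule R (R ⧸ (J : Submodule R R)))
        = Submodule.map (Submodule.mkQ _) (m ^ n • ⊤ : Submodule R R) := by
      rw [Submodule.map_smul'', Submodule.map_top, Submodule.range_mkQ]
    rw [this]
    exact ⟨x - u, hxu, rfl⟩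
  rw [hbot] at hmem
  simpa using (Submodule.Quotient.mk_eq_zero _).1 hmem

end StmtAux

/- STATEMENT 1: Let X be a normal variety, x ∈ X a closed point, X̂ = Spec 𝒪̂_{X,x},
D a Weil divisor on X and D̂ the induced Weil divisor on X̂. Then D is Cartier near x
iff D̂ is Cartier.

Formalization: the statement is local at x, so we work with the normal Noetherian
local domain R = 𝒪_{X,x} and its 𝔪-adic completion R̂ (which, X being a variety in
characteristic zero, is again a normal domain — recorded here as hypotheses).
After shrinking X and changing D by a linear equivalence we may assume D ≤ 0 is
anti-effective, so that 𝒪_X(D) ⊆ 𝒪_X; the divisor D is then encoded by the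
divisorial (i.e. reflexive rank-one) ideal I = 𝒪_X(D)_x ⊆ R, and D̂ by the extended
ideal I·R̂.  "D is Cartier near x" means 𝒪_X(D) is invertible at x, i.e. I is a
principal ideal of the local ring R, and likewise "D̂ is Cartier" means I·R̂ is
principal. -/
theorem stmt_1 (R : Type*) [CommRing R] [IsNoetherianRing R] [IsLocalRing R]
    [IsDomain R] [IsIntegrallyClosed R]
    (hdom : IsDomain (AdicCompletion (IsLocalRing.maximalIdeal R) R))
    (hnormal : IsIntegrallyClosed (AdicCompletion (IsLocalRing.maximalIdeal R) R))
    (I : Ideal R) (hI : I ≠ ⊥) (hrefl : Module.IsReflexive R I) :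
    I.IsPrincipal ↔
      (I.map (algebraMap R (AdicCompletion (IsLocalRing.maximalIdeal R) R))).IsPrincipal := by
  classical
  set m := IsLocalRing.maximalIdeal R with hm
  set f := algebraMap R (AdicCompletion m R) with hfdef
  constructor
  · rintro ⟨⟨a, ha⟩⟩
    refine ⟨⟨f a, le_antisymm ?_ ?_⟩⟩
    · rw [Ideal.map_le_iff_le_comap]
      intro x hx
      rw [ha] at hx
      obtain ⟨r, hr⟩ := Ideal.mem_span_singleton'.mp hx
      have : f x = f r * f a := by rw [← map_mul, hr]
      exact Ideal.mem_span_singleton'.mpr ⟨f r, this.symm⟩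
    · rw [Submodule.span_le, Set.singleton_subset_iff]
      exact Ideal.mem_map_of_mem f (ha ▸ Submodule.mem_span_singleton_self a)
  · rintro ⟨⟨ξ, hξ⟩⟩
    have step : ∀ w ∈ I.map f, ∃ a ∈ I, w - f a ∈ (m.map f) * (I.map f) := by
      intro w hw
      have hw' : w ∈ Submodule.span (AdicCompletion m R) (⇑f '' (I : Set R)) := hw
      clear hw
      induction hw' using Submodule.span_induction with
      | mem w hw =>
        obtain ⟨v, hv, rfl⟩ := hw
        exact ⟨v, hv, by rw [sub_self]; exact Submodule.zero_mem _⟩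
      | zero => exact ⟨0, I.zero_mem, by rw [map_zero, sub_self]; exact Submodule.zero_mem _⟩
      | add u v hu hv ihu ihv =>
        obtain ⟨a, haI, ha⟩ := ihu
        obtain ⟨b, hbI, hb⟩ := ihv
        refine ⟨a + b, I.add_mem haI hbI, ?_⟩
        rw [map_add]
        have h9 : u + v - (f a + f b) = (u - f a) + (v - f b) := by ring
        rw [h9]
        exact Submodule.add_mem _ ha hb
      | smul c w hw ih =>
        obtain ⟨a, haI, ha⟩ := ih
        obtain ⟨d, hd⟩ := exists_sub_mem m c
        refine ⟨d * a, I.mul_mem_left d haI, ?_⟩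
        have heq : c • w - f (d * a) = c * (w - f a) + (c - f d) * f a := by
          rw [smul_eq_mul, map_mul]; ring
        rw [heq]
        exact Submodule.add_mem _ (Ideal.mul_mem_left _ c ha)
          (Ideal.mul_mem_mul hd (Ideal.mem_map_of_mem f haI))
    have hξmem : ξ ∈ I.map f := by
      rw [hξ]; exact Submodule.mem_span_singleton_self ξ
    obtain ⟨a, haI, hda⟩ := step ξ hξmem
    have hsub : I.map f ≤ Ideal.span {f a} ⊔ (m.map f) • (I.map f) := by
      have hξm : ξ ∈ Ideal.span {f a} ⊔ (m.map f) • (I.map f) := by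
        have hsplit : ξ = f a + (ξ - f a) := by ring
        rw [hsplit]
        refine Submodule.add_mem _
          (Submodule.mem_sup_left (Ideal.subset_span rfl))
          (Submodule.mem_sup_right ?_)
        rw [Ideal.smul_eq_mul]
        exact hda
      conv_lhs => rw [hξ]
      rw [Submodule.span_le, Set.singleton_subset_iff]
      exact hξm
    have hFG : (I.map f).FG := Ideal.FG.map (IsNoetherian.noetherian I) f
    have hle : I.map f ≤ Ideal.span {f a} :=
      Submodule.le_of_le_smul_of_le_jacobson_bot hFG (map_le_jacobson_bot m) hsub
    have hdesc : I ≤ Ideal.span {a} ⊔ m • I := by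
      intro x hx
      have hfx : f x ∈ Ideal.span {f a} := hle (Ideal.mem_map_of_mem f hx)
      obtain ⟨c, hc⟩ := Ideal.mem_span_singleton'.mp hfx
      obtain ⟨d, hd⟩ := exists_sub_mem m c
      have hmul : f (x - d * a) ∈ (m * I).map f := by
        rw [Ideal.map_mul]
        have h8 : f (x - d * a) = (c - f d) * f a := by
          rw [map_sub, map_mul, ← hc]; ring
        rw [h8]
        exact Ideal.mul_mem_mul hd (Ideal.mem_map_of_mem f haI)
      have hxd : x - d * a ∈ m * I := mem_of_algebraMap_mem_map (m * I) _ hmul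
      have hxx : x = d * a + (x - d * a) := by ring
      rw [hxx]
      exact Submodule.add_mem _
        (Submodule.mem_sup_left (Ideal.mem_span_singleton'.mpr ⟨d, rfl⟩))
        (Submodule.mem_sup_right (by rw [Ideal.smul_eq_mul]; exact hxd))
    have hjac : m ≤ Ideal.jacobson ⊥ :=
      le_of_eq (IsLocalRing.jacobson_eq_maximalIdeal ⊥ bot_ne_top).symm
    have hle2 : I ≤ Ideal.span {a} :=
      Submodule.le_of_le_smul_of_le_jacobson_bot (IsNoetherian.noetherian I) hjac hdesc
    exact ⟨⟨a, le_antisymm hle2 ((Ideal.span_singleton_le_iff_mem _).mpr haI)⟩⟩
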